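/- arXiv:2602.04879 — 3 statements merged into one kernel-verified Lean document; each statement's English description precedes it below -/
import Mathlib

section
/- (Performance Difference Identity for LLMs) Let μ and π be two policies over sequences of fixed length T on a finite alphabet, with μ(y_t|s_t) > 0 for all reachable prefixes, and let R be a bounded reward function on sequences. Then J(π) − J(μ) = L'(π) − Δ(μ,π), where J(π) = E_{y∼π}[R(y)], L'(π) = E_{y∼μ}[ R(y) Σ_{t=1}^T ( π(y_t|s_t)/μ(y_t|s_t) − 1 ) ], and Δ(μ,π) = E_{y∼μ}[ R(y) Σ_{t=1}^T ( π(y_t|s_t)/μ(y_t|s_t) − 1 )( 1 − Π_{j=t+1}^T π(y_j|s_j)/μ(y_j|s_j) ) ]. -/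
open Finset

def IsPolicy {A : Type*} [Fintype A] (p : List A → A → ℝ) : Prop :=
  ∀ s : List A, (∀ a, 0 ≤ p s a) ∧ ∑ a, p s a = 1

def seqProb {A : Type*} [Fintype A] (p : List A → A → ℝ) {n : ℕ} (y : Fin n → A) : ℝ :=
  ∏ t : Fin n, p ((List.ofFn y).take t.val) (y t)

/-!
Write `ρ t = π(y_t|s_t) / μ(y_t|s_t)` (`stepRatio μ π y t`), so that `π(y) = μ(y) ∏ₜ ρ t`.
The product of the `ρ t` telescopes along the sequence: `∏ₜ ρ t - 1 = ∑ₜ (ρ t - 1) ∏_{j > t} ρ j`.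
Splitting `∏_{j > t} ρ j = 1 - (1 - ∏_{j > t} ρ j)` turns the right-hand side into the integrand
of `L'(π) - Δ(μ, π)`, while the left-hand side, weighted by `μ(y) R(y)`, is the integrand of
`J(π) - J(μ)`.
-/

theorem Finset.sum_sub_one_mul_prod_filter_gt {ι R : Type*} [LinearOrder ι] [CommRing R]
    (s : Finset ι) (f : ι → R) :
    ∑ i ∈ s, (f i - 1) * ∏ j ∈ s with i < j, f j = ∏ i ∈ s, f i - 1 := by
  induction s using Finset.induction_on_min with
  | empty => simp
  | insert a s ha ih =>
    have has : a ∉ s := fun h => lt_irrefl a (ha a h)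
    have hfilter_a : ({j ∈ insert a s | a < j} : Finset ι) = s := by
      ext j
      simp only [mem_filter, mem_insert]
      exact ⟨fun ⟨hj, haj⟩ => hj.resolve_left haj.ne', fun hj => ⟨.inr hj, ha j hj⟩⟩
    have hfilter_s : ∀ i ∈ s, ({j ∈ insert a s | i < j} : Finset ι) = {j ∈ s | i < j} := by
      intro i hi
      rw [filter_insert, if_neg (ha i hi).not_gt]
    rw [sum_insert has, prod_insert has, hfilter_a,
      sum_congr rfl fun i hi => by rw [hfilter_s i hi], ih]
    ring

theorem Finset.sum_sub_one_mul_prod_Ioi {ι R : Type*} [Fintype ι] [LinearOrder ι]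
    [LocallyFiniteOrderTop ι] [CommRing R] (f : ι → R) :
    ∑ i, (f i - 1) * ∏ j ∈ Ioi i, f j = ∏ i, f i - 1 := by
  simp_rw [← filter_lt_eq_Ioi]
  exact sum_sub_one_mul_prod_filter_gt univ f

section Policies

variable {A : Type*} [Fintype A] {n : ℕ}

noncomputable def stepRatio (μ π : List A → A → ℝ) (y : Fin n → A) (t : Fin n) : ℝ :=
  π ((List.ofFn y).take t.val) (y t) / μ ((List.ofFn y).take t.val) (y t)

theorem seqProb_mul_prod_stepRatio {μ π : List A → A → ℝ} (hμ : ∀ s a, μ s a ≠ 0)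
    (y : Fin n → A) : seqProb μ y * ∏ t, stepRatio μ π y t = seqProb π y := by
  rw [seqProb, seqProb, ← prod_mul_distrib]
  exact prod_congr rfl fun t _ => mul_div_cancel₀ _ (hμ _ _)

theorem seqProb_sub_seqProb {μ π : List A → A → ℝ} (hμ : ∀ s a, μ s a ≠ 0) (y : Fin n → A) :
    seqProb π y - seqProb μ y = seqProb μ y *
      ∑ t, (stepRatio μ π y t - 1) * ∏ j ∈ Ioi t, stepRatio μ π y j := by
  rw [sum_sub_one_mul_prod_Ioi, mul_sub, mul_one, seqProb_mul_prod_stepRatio hμ]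

end Policies

theorem performance_difference_identity_llm_general
    {A : Type*} [Fintype A] (T : ℕ) (μ π : List A → A → ℝ) (R : (Fin T → A) → ℝ)
    (hμpos : ∀ (s : List A) (a : A), 0 < μ s a) :
    (∑ y : Fin T → A, seqProb π y * R y) - (∑ y : Fin T → A, seqProb μ y * R y) =
      (∑ y : Fin T → A, seqProb μ y * (R y * ∑ t : Fin T,
          (π ((List.ofFn y).take t.val) (y t) / μ ((List.ofFn y).take t.val) (y t) - 1)))
      - (∑ y : Fin T → A, seqProb μ y * (R y * ∑ t : Fin T,
          (π ((List.ofFn y).take t.val) (y t) / μ ((List.ofFn y).take t.val) (y t) - 1) *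
            (1 - ∏ j ∈ Finset.Ioi t,
              π ((List.ofFn y).take j.val) (y j) / μ ((List.ofFn y).take j.val) (y j)))) := by
  simp only [← sum_sub_distrib, ← sub_mul]
  refine sum_congr rfl fun y _ => ?_
  have hsplit : ∑ t, (stepRatio μ π y t - 1) -
      ∑ t, (stepRatio μ π y t - 1) * (1 - ∏ j ∈ Ioi t, stepRatio μ π y j) =
      ∑ t, (stepRatio μ π y t - 1) * ∏ j ∈ Ioi t, stepRatio μ π y j := by
    rw [← sum_sub_distrib]
    simp only [mul_one_sub, sub_sub_cancel]
  rw [seqProb_sub_seqProb (fun s a => (hμpos s a).ne'), ← hsplit]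
  simp only [stepRatio]
  ring

/-- Performance Difference Identity for LLMs:
`J(π) − J(μ) = L'(π) − Δ(μ, π)`. -/
theorem performance_difference_identity_llm
    {A : Type*} [Fintype A] (T : ℕ) (μ π : List A → A → ℝ) (R : (Fin T → A) → ℝ)
    (hμ : IsPolicy μ) (hπ : IsPolicy π)
    (hμpos : ∀ (s : List A) (a : A), 0 < μ s a) :
    (∑ y : Fin T → A, seqProb π y * R y) - (∑ y : Fin T → A, seqProb μ y * R y) =
      (∑ y : Fin T → A, seqProb μ y * (R y * ∑ t : Fin T,
          (π ((List.ofFn y).take t.val) (y t) / μ ((List.ofFn y).take t.val) (y t) - 1)))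
      - (∑ y : Fin T → A, seqProb μ y * (R y * ∑ t : Fin T,
          (π ((List.ofFn y).take t.val) (y t) / μ ((List.ofFn y).take t.val) (y t) - 1) *
            (1 - ∏ j ∈ Finset.Ioi t,
              π ((List.ofFn y).take j.val) (y j) / μ ((List.ofFn y).take j.val) (y j)))) :=
  performance_difference_identity_llm_general T μ π R hμpos
end

section
/- (Policy Improvement Bound for LLMs) Let μ and π be two policies over sequences of fixed length T on a finite alphabet, with μ strictly positive on each conditional. Let R be a reward function with ξ = max_y |R(y)|, and let δ = max over all prefixes s of D_TV(μ(·|s) ‖ π(·|s)). Then J(π) − J(μ) ≥ L'(π) − 2ξ T(T−1) δ², where J(π) = E_{y∼π}[R(y)] and L'(π) = E_{y∼μ}[ R(y) Σ_{t=1}^T ( π(y_t|s_t)/μ(y_t|s_t) − 1 ) ]. -/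
open Finset

/-!
Peel off the first token. For sequences continuing a prefix `s`, the error
`E = J(π) - J(μ) - L'(π)` satisfies
`E = ∑ₐ π(a|s) Eₐ + ∑ₐ (π(a|s) - μ(a|s)) L'ₐ`,
where `Eₐ` and `L'ₐ` are the same quantities for the remaining `n` tokens after `s ++ [a]`.
Since `|J| ≤ ξ`, the analogous recursion for `L'` gives `|L'ₐ| ≤ 2nξδ`, and the second sum is at
most `2δ · 2nξδ`. The error bounds therefore satisfy `cₙ₊₁ = cₙ + 4nξδ²`, i.e. `cₙ = 2ξn(n-1)δ²`.
-/

namespace PolicyImprovement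

variable {A : Type*}

lemma sum_fin_succ_pi [Fintype A] {n : ℕ} (F : (Fin (n + 1) → A) → ℝ) :
    ∑ y, F y = ∑ a, ∑ z : Fin n → A, F (Fin.cons a z) := by
  rw [← (Fin.consEquiv fun _ => A).sum_comp F, Fintype.sum_prod_type]
  rfl

lemma abs_sum_mul_le {ι : Type*} (s : Finset ι) (g f : ι → ℝ) {C : ℝ}
    (hf : ∀ i ∈ s, |f i| ≤ C) : |∑ i ∈ s, g i * f i| ≤ (∑ i ∈ s, |g i|) * C := by
  calc |∑ i ∈ s, g i * f i| ≤ ∑ i ∈ s, |g i| * |f i| := by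
        simpa only [abs_mul] using Finset.abs_sum_le_sum_abs (fun i => g i * f i) s
    _ ≤ ∑ i ∈ s, |g i| * C :=
        Finset.sum_le_sum fun i hi => mul_le_mul_of_nonneg_left (hf i hi) (abs_nonneg _)
    _ = (∑ i ∈ s, |g i|) * C := (Finset.sum_mul _ _ _).symm

/-- `stepwise f s y t = f (s ++ [y₀, …, y_{t-1}]) y_t`. -/
def stepwise {β : Type*} (f : List A → A → β) (s : List A) {n : ℕ} (y : Fin n → A) (t : Fin n) :
    β :=
  f (s ++ (List.ofFn y).take t) (y t)

lemma stepwise_cons {β : Type*} (f : List A → A → β) (s : List A) {n : ℕ} (a : A)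
    (z : Fin n → A) :
    stepwise f s (Fin.cons a z) = Fin.cons (f s a) (stepwise f (s ++ [a]) z) := by
  ext t
  refine Fin.cases ?_ (fun t => ?_) t <;> simp [stepwise, List.ofFn_succ]

def seqProbFrom (p : List A → A → ℝ) (s : List A) {n : ℕ} (y : Fin n → A) : ℝ :=
  ∏ t, stepwise p s y t

lemma seqProbFrom_cons (p : List A → A → ℝ) (s : List A) {n : ℕ} (a : A) (z : Fin n → A) :
    seqProbFrom p s (Fin.cons a z) = p s a * seqProbFrom p (s ++ [a]) z := by
  rw [seqProbFrom, stepwise_cons, Fin.prod_cons, seqProbFrom]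

variable [Fintype A]

lemma IsPolicy.sum_abs {p : List A → A → ℝ} (hp : IsPolicy p) (s : List A) :
    ∑ a, |p s a| = 1 := by
  rw [← (hp s).2]
  exact Finset.sum_congr rfl fun a _ => abs_of_nonneg ((hp s).1 a)

def expectedReward (p : List A → A → ℝ) (s : List A) {n : ℕ} (R : (Fin n → A) → ℝ) : ℝ :=
  ∑ y, seqProbFrom p s y * R y

/-- The surrogate `L'(π)` of the paper, for continuations of the prefix `s`. -/
noncomputable def surrogateGain (μ π : List A → A → ℝ) (s : List A) {n : ℕ}
    (R : (Fin n → A) → ℝ) : ℝ :=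
  ∑ y, seqProbFrom μ s y * (R y * ∑ t, stepwise (fun s a => π s a / μ s a - 1) s y t)

lemma seqProbFrom_nil (p : List A → A → ℝ) {n : ℕ} (y : Fin n → A) :
    seqProbFrom p [] y = seqProb p y := by
  simp [seqProbFrom, seqProb, stepwise]

lemma expectedReward_succ (p : List A → A → ℝ) (s : List A) {n : ℕ}
    (R : (Fin (n + 1) → A) → ℝ) :
    expectedReward p s R = ∑ a, p s a * expectedReward p (s ++ [a]) (R <| Fin.cons a ·) := by
  simp only [expectedReward, sum_fin_succ_pi, seqProbFrom_cons, Finset.mul_sum, mul_assoc]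

lemma surrogateGain_succ (μ π : List A → A → ℝ) (hμ : ∀ s a, μ s a ≠ 0) (s : List A) {n : ℕ}
    (R : (Fin (n + 1) → A) → ℝ) :
    surrogateGain μ π s R = ∑ a, ((π s a - μ s a) * expectedReward μ (s ++ [a]) (R <| Fin.cons a ·)
      + μ s a * surrogateGain μ π (s ++ [a]) (R <| Fin.cons a ·)) := by
  simp only [surrogateGain, expectedReward, sum_fin_succ_pi, seqProbFrom_cons, stepwise_cons,
    Fin.sum_cons]
  refine Finset.sum_congr rfl fun a _ => ?_
  rw [Finset.mul_sum, Finset.mul_sum, ← Finset.sum_add_distrib]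
  refine Finset.sum_congr rfl fun z _ => ?_
  have hratio : μ s a * (π s a / μ s a - 1) = π s a - μ s a := by
    field_simp [hμ s a]
  linear_combination (seqProbFrom μ (s ++ [a]) z * R (Fin.cons a z)) * hratio

lemma linearizationError_succ (μ π : List A → A → ℝ) (hμ : ∀ s a, μ s a ≠ 0) (s : List A)
    {n : ℕ} (R : (Fin (n + 1) → A) → ℝ) :
    expectedReward π s R - expectedReward μ s R - surrogateGain μ π s R
      = ∑ a, (π s a * (expectedReward π (s ++ [a]) (R <| Fin.cons a ·)
          - expectedReward μ (s ++ [a]) (R <| Fin.cons a ·)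
          - surrogateGain μ π (s ++ [a]) (R <| Fin.cons a ·))
        + (π s a - μ s a) * surrogateGain μ π (s ++ [a]) (R <| Fin.cons a ·)) := by
  rw [expectedReward_succ, expectedReward_succ, surrogateGain_succ μ π hμ,
    ← Finset.sum_sub_distrib, ← Finset.sum_sub_distrib]
  exact Finset.sum_congr rfl fun a _ => by ring

section Bounds

variable {μ π : List A → A → ℝ} {ξ δ : ℝ}

lemma abs_expectedReward_le {p : List A → A → ℝ} (hp : IsPolicy p) :
    ∀ {n : ℕ} (s : List A) (R : (Fin n → A) → ℝ), (∀ y, |R y| ≤ ξ) →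
      |expectedReward p s R| ≤ ξ
  | 0, s, R, hR => by simpa [expectedReward, seqProbFrom] using hR _
  | n + 1, s, R, hR => by
    rw [expectedReward_succ]
    simpa [IsPolicy.sum_abs hp] using abs_sum_mul_le Finset.univ (p s) _ fun a _ =>
      abs_expectedReward_le hp (s ++ [a]) (R <| Fin.cons a ·) fun z => hR _

lemma abs_surrogateGain_le (hμ : IsPolicy μ) (hμpos : ∀ s a, 0 < μ s a) (hξ : 0 ≤ ξ)
    (hδ : ∀ s, ∑ a, |π s a - μ s a| ≤ 2 * δ) :
    ∀ {n : ℕ} (s : List A) (R : (Fin n → A) → ℝ), (∀ y, |R y| ≤ ξ) →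
      |surrogateGain μ π s R| ≤ 2 * n * ξ * δ
  | 0, s, R, hR => by simp [surrogateGain]
  | n + 1, s, R, hR => by
    have hJ := abs_sum_mul_le Finset.univ (fun a => π s a - μ s a) _ fun a _ =>
      abs_expectedReward_le hμ (s ++ [a]) (R <| Fin.cons a ·) fun z => hR _
    have hL := abs_sum_mul_le Finset.univ (μ s) _ fun a _ =>
      abs_surrogateGain_le hμ hμpos hξ hδ (s ++ [a]) (R <| Fin.cons a ·) fun z => hR _
    rw [surrogateGain_succ μ π (fun s a => (hμpos s a).ne'), Finset.sum_add_distrib]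
    rw [IsPolicy.sum_abs hμ, one_mul] at hL
    have := mul_le_mul_of_nonneg_right (hδ s) hξ
    calc _ ≤ _ := abs_add_le _ _
      _ ≤ 2 * ((n + 1 : ℕ) : ℝ) * ξ * δ := by push_cast; linarith

theorem abs_linearizationError_le (hμ : IsPolicy μ) (hπ : IsPolicy π)
    (hμpos : ∀ s a, 0 < μ s a) (hξ : 0 ≤ ξ) (hδ : ∀ s, ∑ a, |π s a - μ s a| ≤ 2 * δ) :
    ∀ {n : ℕ} (s : List A) (R : (Fin n → A) → ℝ), (∀ y, |R y| ≤ ξ) →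
      |expectedReward π s R - expectedReward μ s R - surrogateGain μ π s R|
        ≤ 2 * ξ * n * (n - 1) * δ ^ 2
  | 0, s, R, hR => by simp [expectedReward, surrogateGain, seqProbFrom]
  | n + 1, s, R, hR => by
    have hδ₀ : 0 ≤ δ := by linarith [(Finset.sum_nonneg fun a _ => abs_nonneg _).trans (hδ [])]
    have hE := abs_sum_mul_le Finset.univ (π s) _ fun a _ =>
      abs_linearizationError_le hμ hπ hμpos hξ hδ (s ++ [a]) (R <| Fin.cons a ·) fun z => hR _
    have hL := abs_sum_mul_le Finset.univ (fun a => π s a - μ s a) _ fun a _ =>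
      abs_surrogateGain_le hμ hμpos hξ hδ (s ++ [a]) (R <| Fin.cons a ·) fun z => hR _
    rw [IsPolicy.sum_abs hπ, one_mul] at hE
    have := mul_le_mul_of_nonneg_right (hδ s) (by positivity : (0 : ℝ) ≤ 2 * n * ξ * δ)
    rw [linearizationError_succ μ π (fun s a => (hμpos s a).ne'), Finset.sum_add_distrib]
    calc _ ≤ _ := abs_add_le _ _
      _ ≤ 2 * ξ * ((n + 1 : ℕ) : ℝ) * ((n + 1 : ℕ) - 1) * δ ^ 2 := by push_cast; linarith

end Bounds

end PolicyImprovement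

open PolicyImprovement in
/-- Policy Improvement Bound for LLMs:
`J(π) − J(μ) ≥ L'(π) − 2ξT(T−1)δ²`, where ξ bounds |R| and δ bounds all
single-step conditional TV divergences. -/
theorem policy_improvement_bound_llm
    {A : Type*} [Fintype A] [Nonempty A] (T : ℕ) (μ π : List A → A → ℝ)
    (R : (Fin T → A) → ℝ) (ξ δ : ℝ)
    (hμ : IsPolicy μ) (hπ : IsPolicy π)
    (hμpos : ∀ (s : List A) (a : A), 0 < μ s a)
    (hξ : ∀ y : Fin T → A, |R y| ≤ ξ)
    (hδ : ∀ s : List A, (1 / 2) * ∑ a, |μ s a - π s a| ≤ δ) :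
    (∑ y : Fin T → A, seqProb π y * R y) - (∑ y : Fin T → A, seqProb μ y * R y) ≥
      (∑ y : Fin T → A, seqProb μ y * (R y * ∑ t : Fin T,
          (π ((List.ofFn y).take t.val) (y t) / μ ((List.ofFn y).take t.val) (y t) - 1)))
      - 2 * ξ * T * (T - 1) * δ ^ 2 := by
  have hξ₀ : 0 ≤ ξ := (abs_nonneg _).trans (hξ fun _ => Classical.arbitrary A)
  have hTV (s : List A) : ∑ a, |π s a - μ s a| ≤ 2 * δ := by
    simp only [abs_sub_comm (π s _)]
    linarith [hδ s]
  have key := (abs_le.mp (abs_linearizationError_le hμ hπ hμpos hξ₀ hTV [] R hξ)).1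
  simp only [expectedReward, surrogateGain, seqProbFrom_nil, stepwise, List.nil_append] at key
  linarith
end

section
/- (Linear-in-T error bound) Under the same setup as the policy improvement identity, the error term satisfies Δ(μ,π) ≤ 4ξ · E_{y∼μ}[ Σ_{t=1}^T D_TV( μ(·|s_t) ‖ π(·|s_t) ) ], where ξ = max_y |R(y)|. Consequently, J(π) − J(μ) ≥ L'(π) − 4ξ · E_{y∼μ}[ Σ_{t=1}^T D_TV( μ(·|s_t) ‖ π(·|s_t) ) ]. -/
open Finset

/-!
Multiplying out the ratio, `L'(π)` is the sum over steps `t` of the sequence weights of `μ` with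
the factor at step `t` replaced by `π - μ`. Telescoping through the hybrid policies that follow
`μ` before step `t` and `π` from step `t` on writes `J(π) - J(μ)` in the same way, except that
the steps after `t` are weighted by `π`. With `|R| ≤ ξ`, each of the two families contributes at
most `ξ · Σ_t E_{y∼μ}[Σ_a |π - μ|(a|s_t)] = 2ξ · Σ_t E_{y∼μ}[D_TV]`: summing out the steps
after `t` leaves only the law of the prefix `s_t` under `μ`, because those conditionals are
probability distributions.
-/

namespace SequencePolicy

lemma sum_mul_sum_sub_le {ι κ : Type*} {s : Finset ι} {u : Finset κ} {R : ι → ℝ} {ξ : ℝ}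
    (hR : ∀ i ∈ s, |R i| ≤ ξ) (X Y : ι → κ → ℝ) :
    ∑ i ∈ s, R i * ∑ k ∈ u, (X i k - Y i k) ≤ ξ * ∑ k ∈ u, ∑ i ∈ s, (|X i k| + |Y i k|) := by
  rw [sum_comm, mul_sum]
  refine sum_le_sum fun i hi => ?_
  calc R i * ∑ k ∈ u, (X i k - Y i k)
      ≤ |R i| * |∑ k ∈ u, (X i k - Y i k)| := by rw [← abs_mul]; exact le_abs_self _
    _ ≤ ξ * ∑ k ∈ u, (|X i k| + |Y i k|) :=
      mul_le_mul (hR i hi) ((abs_sum_le_sum_abs _ _).trans (sum_le_sum fun k _ => abs_sub _ _))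
        (abs_nonneg _) ((abs_nonneg _).trans (hR i hi))

variable {A : Type*}

lemma length_take_ofFn {n : ℕ} (y : Fin n → A) (s : Fin n) :
    ((List.ofFn y).take s).length = s := by
  simp [s.isLt.le]

lemma ofFn_snoc {n : ℕ} (y : Fin n → A) (a : A) :
    List.ofFn (Fin.snoc y a : Fin (n + 1) → A) = List.ofFn y ++ [a] := by
  rw [List.ofFn_succ']
  simp

def updateStep (p : List A → A → ℝ) (t : ℕ) (q : List A → A → ℝ) : List A → A → ℝ :=
  fun l => if l.length = t then q l else p l

def hybrid (t : ℕ) (p q : List A → A → ℝ) : List A → A → ℝ :=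
  fun l => if l.length < t then p l else q l

lemma updateStep_hybrid_self (t : ℕ) (p q : List A → A → ℝ) :
    updateStep (hybrid t p q) t q = hybrid t p q := by
  funext l
  by_cases h : l.length = t <;> simp [updateStep, hybrid, h]

lemma updateStep_hybrid_left (t : ℕ) (p q : List A → A → ℝ) :
    updateStep (hybrid t p q) t p = hybrid (t + 1) p q := by
  funext l
  unfold updateStep hybrid
  split_ifs <;> first | rfl | omega

section Fintype

variable [Fintype A]

lemma isPolicy_hybrid {p q : List A → A → ℝ} (hp : IsPolicy p) (hq : IsPolicy q) (t : ℕ) :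
    IsPolicy (hybrid t p q) := fun l => by
  unfold hybrid
  split_ifs
  exacts [hp l, hq l]

lemma seqProb_congr {p q : List A → A → ℝ} {n : ℕ} (h : ∀ l : List A, l.length < n → p l = q l)
    (y : Fin n → A) : seqProb p y = seqProb q y :=
  prod_congr rfl fun s _ => by rw [h _ (by rw [length_take_ofFn]; exact s.isLt)]

lemma seqProb_hybrid (t : ℕ) (p q : List A → A → ℝ) (y : Fin t → A) :
    seqProb (hybrid t p q) y = seqProb p y :=
  seqProb_congr (fun _ hl => if_pos hl) y

lemma seqProb_updateStep (p q : List A → A → ℝ) {n : ℕ} (y : Fin n → A) (t : Fin n) :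
    seqProb (updateStep p t q) y =
      q ((List.ofFn y).take t) (y t) * ∏ s ∈ univ.erase t, p ((List.ofFn y).take s) (y s) := by
  rw [seqProb, ← mul_prod_erase _ _ (mem_univ t)]
  congr 1
  · simp [updateStep]
  · refine prod_congr rfl fun s hs => ?_
    have hst : (s : ℕ) ≠ t := Fin.val_ne_of_ne (ne_of_mem_erase hs)
    simp [updateStep, hst]

lemma seqProb_updateStep_sub (p q r : List A → A → ℝ) {n : ℕ} (y : Fin n → A) (t : Fin n) :
    seqProb (updateStep p t (q - r)) y =
      seqProb (updateStep p t q) y - seqProb (updateStep p t r) y := by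
  simp only [seqProb_updateStep, Pi.sub_apply, sub_mul]

lemma abs_seqProb_updateStep {p : List A → A → ℝ} (hp : ∀ l a, 0 ≤ p l a)
    (q : List A → A → ℝ) {n : ℕ} (y : Fin n → A) (t : Fin n) :
    |seqProb (updateStep p t q) y| = seqProb (updateStep p t fun l a => |q l a|) y := by
  rw [seqProb_updateStep, seqProb_updateStep, abs_mul,
    abs_of_nonneg (prod_nonneg fun s _ => hp _ _)]

lemma seqProb_mul_div_sub_one (p q : List A → A → ℝ) {n : ℕ} (y : Fin n → A) (t : Fin n)
    (hp : p ((List.ofFn y).take t) (y t) ≠ 0) :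
    seqProb p y * (q ((List.ofFn y).take t) (y t) / p ((List.ofFn y).take t) (y t) - 1) =
      seqProb (updateStep p t (q - p)) y := by
  rw [seqProb_updateStep, seqProb, ← mul_prod_erase _ _ (mem_univ t), Pi.sub_apply, Pi.sub_apply]
  field_simp

/-- The hybrids `hybrid t p q` run from `q` at `t = 0` to `p` at `t = n`. -/
lemma seqProb_sub_seqProb (p q : List A → A → ℝ) {n : ℕ} (y : Fin n → A) :
    seqProb q y - seqProb p y = ∑ t : Fin n, seqProb (updateStep (hybrid t p q) t (q - p)) y := by
  have h0 : seqProb (hybrid 0 p q) y = seqProb q y :=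
    seqProb_congr (fun l _ => if_neg l.length.not_lt_zero) y
  simp_rw [seqProb_updateStep_sub, updateStep_hybrid_self, updateStep_hybrid_left]
  rw [Fin.sum_univ_eq_sum_range
      (fun t => seqProb (hybrid t p q) y - seqProb (hybrid (t + 1) p q) y),
    sum_range_sub', h0, seqProb_hybrid]

lemma seqProb_snoc (p : List A → A → ℝ) {n : ℕ} (y : Fin n → A) (a : A) :
    seqProb p (Fin.snoc y a : Fin (n + 1) → A) = seqProb p y * p (List.ofFn y) a := by
  have hprefix : ∀ s : ℕ, s ≤ n → (List.ofFn y ++ [a]).take s = (List.ofFn y).take s :=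
    fun s hs => List.take_append_of_le_length (by simpa using hs)
  simp only [seqProb, ofFn_snoc, Fin.prod_univ_castSucc, Fin.snoc_castSucc, Fin.snoc_last,
    Fin.val_last, Fin.val_castSucc, hprefix _ le_rfl, List.take_of_length_le (List.length_ofFn).le]
  congr 1
  exact prod_congr rfl fun s _ => by rw [hprefix s s.isLt.le]

lemma sum_seqProb_succ (p : List A → A → ℝ) (F : List A → ℝ) (n : ℕ) :
    ∑ y : Fin (n + 1) → A, seqProb p y * F (List.ofFn y) =
      ∑ y : Fin n → A, seqProb p y * ∑ a, p (List.ofFn y) a * F (List.ofFn y ++ [a]) := by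
  rw [← (Fin.snocEquiv fun _ => A).sum_comp, Fintype.sum_prod_type, sum_comm]
  refine sum_congr rfl fun y _ => ?_
  rw [mul_sum]
  refine sum_congr rfl fun a _ => ?_
  change seqProb p (Fin.snoc y a : Fin (n + 1) → A) *
    F (List.ofFn (Fin.snoc y a : Fin (n + 1) → A)) = _
  rw [seqProb_snoc, ofFn_snoc, mul_assoc]

lemma sum_seqProb_mul_take {p : List A → A → ℝ} {k : ℕ}
    (hp : ∀ l : List A, k ≤ l.length → ∑ a, p l a = 1) (F : List A → ℝ) {n : ℕ} (hk : k ≤ n) :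
    ∑ y : Fin n → A, seqProb p y * F ((List.ofFn y).take k) =
      ∑ y : Fin k → A, seqProb p y * F (List.ofFn y) := by
  induction n, hk using Nat.le_induction with
  | base => exact sum_congr rfl fun y _ => by rw [List.take_of_length_le (by simp)]
  | succ n hkn ih =>
    rw [sum_seqProb_succ p fun l => F (l.take k), ← ih]
    refine sum_congr rfl fun y _ => ?_
    have hlen : k ≤ (List.ofFn y).length := by simpa using hkn
    simp only [List.take_append_of_le_length hlen, ← sum_mul, hp _ hlen, one_mul]

lemma sum_seqProb_updateStep {p : List A → A → ℝ} (hp : ∀ l, ∑ a, p l a = 1)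
    (q : List A → A → ℝ) {n : ℕ} (t : Fin n) :
    ∑ y : Fin n → A, seqProb (updateStep p t q) y =
      ∑ y : Fin t → A, seqProb p y * ∑ a, q (List.ofFn y) a := by
  have hsum : ∀ l : List A, (t : ℕ) + 1 ≤ l.length → ∑ a, updateStep p t q l a = 1 :=
    fun l hl => by simp only [updateStep, if_neg (show l.length ≠ t by omega), hp]
  have htail := sum_seqProb_mul_take hsum (fun _ => 1) t.isLt
  have hlast := sum_seqProb_succ (updateStep p t q) (fun _ => 1) t
  simp only [mul_one] at htail hlast
  rw [htail, hlast]
  refine sum_congr rfl fun y _ => ?_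
  have hlen : (List.ofFn y).length = t := List.length_ofFn
  rw [seqProb_congr (p := updateStep p t q) (q := p) (fun l hl => if_neg hl.ne) y]
  simp only [updateStep, if_pos hlen]

lemma sum_abs_seqProb_updateStep {p : List A → A → ℝ} (hp : IsPolicy p)
    (q : List A → A → ℝ) {n : ℕ} (t : Fin n) :
    ∑ y : Fin n → A, |seqProb (updateStep p t q) y| =
      ∑ y : Fin t → A, seqProb p y * ∑ a, |q (List.ofFn y) a| := by
  simp_rw [abs_seqProb_updateStep fun l => (hp l).1]
  exact sum_seqProb_updateStep (fun l => (hp l).2) _ t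

variable {T : ℕ}

-- `J(p)`, `L'(π)` and `E_{y∼μ}[Σ_t D_TV(μ(·|s_t) ‖ π(·|s_t))]`, with `s_t = y.take t`.
def expectedReward (p : List A → A → ℝ) (R : (Fin T → A) → ℝ) : ℝ :=
  ∑ y : Fin T → A, seqProb p y * R y

noncomputable def surrogateGain (μ π : List A → A → ℝ) (R : (Fin T → A) → ℝ) : ℝ :=
  ∑ y : Fin T → A, seqProb μ y * (R y * ∑ t : Fin T,
    (π ((List.ofFn y).take t) (y t) / μ ((List.ofFn y).take t) (y t) - 1))

noncomputable def tvDist (p q : List A → A → ℝ) (l : List A) : ℝ :=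
  (1 / 2) * ∑ a, |p l a - q l a|

noncomputable def expectedTVSum (μ π : List A → A → ℝ) (T : ℕ) : ℝ :=
  ∑ y : Fin T → A, seqProb μ y * ∑ t : Fin T, tvDist μ π ((List.ofFn y).take t)

lemma sum_abs_sub_eq_two_mul_tvDist (p q : List A → A → ℝ) (l : List A) :
    ∑ a, |(q - p) l a| = 2 * tvDist p q l := by
  simp only [tvDist, Pi.sub_apply, abs_sub_comm (q l _)]
  ring

lemma surrogateGain_sub_eq {μ : List A → A → ℝ} (hμ : ∀ l a, μ l a ≠ 0)
    (π : List A → A → ℝ) (R : (Fin T → A) → ℝ) :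
    surrogateGain μ π R - (expectedReward π R - expectedReward μ R) =
      ∑ y : Fin T → A, R y * ∑ t : Fin T, (seqProb (updateStep μ t (π - μ)) y -
        seqProb (updateStep (hybrid t μ π) t (π - μ)) y) := by
  have hL : surrogateGain μ π R =
      ∑ y : Fin T → A, R y * ∑ t : Fin T, seqProb (updateStep μ t (π - μ)) y := by
    refine sum_congr rfl fun y _ => ?_
    rw [mul_left_comm, mul_sum]
    simp only [seqProb_mul_div_sub_one μ π y _ (hμ _ _)]
  have hJ : expectedReward π R - expectedReward μ R =
      ∑ y : Fin T → A, R y * ∑ t : Fin T, seqProb (updateStep (hybrid t μ π) t (π - μ)) y := by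
    rw [expectedReward, expectedReward, ← sum_sub_distrib]
    refine sum_congr rfl fun y _ => ?_
    rw [← seqProb_sub_seqProb]
    ring
  rw [hL, hJ, ← sum_sub_distrib]
  exact sum_congr rfl fun y _ => by rw [sum_sub_distrib, mul_sub]

lemma expectedTVSum_eq {μ : List A → A → ℝ} (hμ : ∀ l, ∑ a, μ l a = 1) (π : List A → A → ℝ)
    (T : ℕ) :
    expectedTVSum μ π T =
      ∑ t : Fin T, ∑ y : Fin t → A, seqProb μ y * tvDist μ π (List.ofFn y) := by
  rw [expectedTVSum]
  simp_rw [mul_sum]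
  rw [sum_comm]
  exact sum_congr rfl fun t _ => sum_seqProb_mul_take (fun l _ => hμ l) _ t.isLt.le

theorem surrogateGain_sub_le {μ π : List A → A → ℝ} (hμ : IsPolicy μ) (hπ : IsPolicy π)
    (hμpos : ∀ l a, 0 < μ l a) {R : (Fin T → A) → ℝ} {ξ : ℝ} (hξ : ∀ y, |R y| ≤ ξ) :
    surrogateGain μ π R - (expectedReward π R - expectedReward μ R) ≤
      4 * ξ * expectedTVSum μ π T := by
  have hhybrid (t : Fin T) :
      ∑ y : Fin T → A, |seqProb (updateStep (hybrid t μ π) t (π - μ)) y| =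
        ∑ y : Fin t → A, seqProb μ y * ∑ a, |(π - μ) (List.ofFn y) a| := by
    simp only [sum_abs_seqProb_updateStep (isPolicy_hybrid hμ hπ t), seqProb_hybrid]
  rw [surrogateGain_sub_eq (fun l a => (hμpos l a).ne'), expectedTVSum_eq fun l => (hμ l).2]
  refine (sum_mul_sum_sub_le (fun y _ => hξ y) _ _).trans_eq ?_
  simp only [sum_add_distrib, sum_abs_seqProb_updateStep hμ, hhybrid,
    sum_abs_sub_eq_two_mul_tvDist, mul_left_comm _ (2 : ℝ), ← mul_sum]
  ring

end Fintype

end SequencePolicy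

/-- Linear-in-T error bound: `Δ(μ,π) ≤ 4ξ · E_{y∼μ}[Σ_t D_TV(μ(·|s_t) ‖ π(·|s_t))]`,
and consequently `J(π) − J(μ) ≥ L'(π) − 4ξ · E_{y∼μ}[Σ_t D_TV(μ(·|s_t) ‖ π(·|s_t))]`. -/
theorem linear_in_horizon_error_bound
    {A : Type*} [Fintype A] (T : ℕ) (μ π : List A → A → ℝ)
    (R : (Fin T → A) → ℝ) (ξ : ℝ)
    (hμ : IsPolicy μ) (hπ : IsPolicy π)
    (hμpos : ∀ (s : List A) (a : A), 0 < μ s a)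
    (hξ : ∀ y : Fin T → A, |R y| ≤ ξ) :
    ((∑ y : Fin T → A, seqProb μ y * (R y * ∑ t : Fin T,
          (π ((List.ofFn y).take t.val) (y t) / μ ((List.ofFn y).take t.val) (y t) - 1)))
        - ((∑ y : Fin T → A, seqProb π y * R y) - (∑ y : Fin T → A, seqProb μ y * R y))
      ≤ 4 * ξ * ∑ y : Fin T → A, seqProb μ y * ∑ t : Fin T,
          (1 / 2) * ∑ a, |μ ((List.ofFn y).take t.val) a - π ((List.ofFn y).take t.val) a|) ∧
    ((∑ y : Fin T → A, seqProb π y * R y) - (∑ y : Fin T → A, seqProb μ y * R y) ≥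
      (∑ y : Fin T → A, seqProb μ y * (R y * ∑ t : Fin T,
          (π ((List.ofFn y).take t.val) (y t) / μ ((List.ofFn y).take t.val) (y t) - 1)))
        - 4 * ξ * ∑ y : Fin T → A, seqProb μ y * ∑ t : Fin T,
            (1 / 2) * ∑ a, |μ ((List.ofFn y).take t.val) a - π ((List.ofFn y).take t.val) a|) := by
  have h := SequencePolicy.surrogateGain_sub_le hμ hπ hμpos hξ
  exact ⟨h, sub_le_comm.mp h⟩
end
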